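/- For any ring extension B ⊆ A, the B-central tensor square T = (A ⊗_B A)^B carries a unital associative ring structure given by t t' = t'^1 t^1 ⊗ t^2 t'^2, with unit 1 ⊗ 1, and this ring is isomorphic to End_{A-A}(A ⊗_B A) via F ↦ F(1 ⊗ 1). -/

import Mathlib

open TensorProduct

noncomputable section

namespace D2

variable (A : Type*) [Ring A] (B : Subring A)

/-- The defining relations of `A ⊗_B A` as a quotient of `A ⊗_ℤ A`. -/
def relSub : Submodule ℤ (A ⊗[ℤ] A) :=
  Submodule.span ℤ {x | ∃ (a c : A) (b : B), x = (a * (b : A)) ⊗ₜ[ℤ] c - a ⊗ₜ[ℤ] ((b : A) * c)}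

/-- The tensor square `A ⊗_B A` of a ring extension `B ⊆ A`. -/
abbrev TensorSq := (A ⊗[ℤ] A) ⧸ relSub A B

/-- The class of a simple tensor `a ⊗_B c`. -/
def tmulB (a c : A) : TensorSq A B := Submodule.Quotient.mk (a ⊗ₜ[ℤ] c)

/-- Left multiplication `a₀ • (x ⊗ y) = (a₀ x) ⊗ y` on `A ⊗_B A`. -/
def lmul (a : A) : TensorSq A B →ₗ[ℤ] TensorSq A B :=
  Submodule.mapQ _ _ (TensorProduct.map (LinearMap.mulLeft ℤ a) LinearMap.id) (by
    rw [relSub, Submodule.span_le]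
    rintro x ⟨a', c, b, rfl⟩
    simp only [SetLike.mem_coe, Submodule.mem_comap, map_sub, TensorProduct.map_tmul,
      LinearMap.mulLeft_apply, LinearMap.id_apply]
    refine Submodule.subset_span ⟨a * a', c, b, ?_⟩
    erw [map_sub, TensorProduct.map_tmul, TensorProduct.map_tmul]
    simp only [LinearMap.mulLeft_apply, LinearMap.id_apply, mul_assoc])

/-- Right multiplication `(x ⊗ y) • a₀ = x ⊗ (y a₀)` on `A ⊗_B A`. -/
def rmul (a : A) : TensorSq A B →ₗ[ℤ] TensorSq A B :=
  Submodule.mapQ _ _ (TensorProduct.map LinearMap.id (LinearMap.mulRight ℤ a)) (by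
    rw [relSub, Submodule.span_le]
    rintro x ⟨a', c, b, rfl⟩
    simp only [SetLike.mem_coe, Submodule.mem_comap, map_sub, TensorProduct.map_tmul,
      LinearMap.mulRight_apply, LinearMap.id_apply]
    refine Submodule.subset_span ⟨a', c * a, b, ?_⟩
    erw [map_sub, TensorProduct.map_tmul, TensorProduct.map_tmul]
    simp only [LinearMap.mulRight_apply, LinearMap.id_apply, mul_assoc])

/-- The multiplication map `A ⊗_B A → A`, `x ⊗ y ↦ x y`. -/
def mulQ : TensorSq A B →ₗ[ℤ] A :=
  Submodule.liftQ _ (LinearMap.mul' ℤ A) (by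
    rw [relSub, Submodule.span_le]
    rintro x ⟨a, c, b, rfl⟩
    change (LinearMap.mul' ℤ A) _ = 0
    erw [map_sub, LinearMap.mul'_apply, LinearMap.mul'_apply]
    simp [mul_assoc])

/-- An element `t` of `A ⊗_B A` is `B`-central when `b t = t b` for all `b ∈ B`. -/
def IsBCentral (t : TensorSq A B) : Prop := ∀ b ∈ B, lmul A B b t = rmul A B b t

/-- An element `t` of `A ⊗_B A` is `A`-central (a Casimir element) when `a t = t a`. -/
def IsACentral (t : TensorSq A B) : Prop := ∀ a : A, lmul A B a t = rmul A B a t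

/-- A `B`-`B`-bimodule endomorphism of `A`. -/
def IsBB (α : A →ₗ[ℤ] A) : Prop :=
  ∀ b ∈ B, ∀ a : A, α ((b : A) * a) = b * α a ∧ α (a * b) = α a * b

/-- A right `B`-module endomorphism of `A`. -/
def IsRightB (f : A →ₗ[ℤ] A) : Prop := ∀ a : A, ∀ b ∈ B, f (a * b) = f a * b

/-- `x ↦ (x·) ⊗ id` as a linear map, used to build Sweedler-type expressions. -/
def lmulTen : A →ₗ[ℤ] (A ⊗[ℤ] A) →ₗ[ℤ] (A ⊗[ℤ] A) where
  toFun a := TensorProduct.map (LinearMap.mulLeft ℤ a) LinearMap.id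
  map_add' a a' := by
    apply TensorProduct.ext'
    intro x y
    erw [LinearMap.add_apply, TensorProduct.map_tmul, TensorProduct.map_tmul,
      TensorProduct.map_tmul]
    simp [add_mul, TensorProduct.add_tmul]
  map_smul' z a := by
    apply TensorProduct.ext'
    intro x y
    simp only [TensorProduct.map_tmul, LinearMap.mulLeft_apply, LinearMap.id_apply,
      LinearMap.smul_apply, RingHom.id_apply, smul_mul_assoc, TensorProduct.smul_tmul']
    erw [LinearMap.smul_apply, TensorProduct.map_tmul]
    rfl

/-- For `ζ = Σ u ⊗ v`, the map `a ↦ Σ α(a u) v`, i.e. `α(? ζ¹) ζ²`. -/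
def sweed (α : A →ₗ[ℤ] A) (ζ : A ⊗[ℤ] A) : A →ₗ[ℤ] A :=
  ((LinearMap.mul' ℤ A).comp (TensorProduct.map α LinearMap.id)).comp ((lmulTen A).flip ζ)

/-- For `ζ = Σ u ⊗ v`, the element `Σ u r v` ("sandwich" evaluation `ζ¹ r ζ²`). -/
def sandw (r : A) (ζ : A ⊗[ℤ] A) : A :=
  (LinearMap.mul' ℤ A) ((TensorProduct.map (LinearMap.mulRight ℤ r) LinearMap.id) ζ)

/-- `mul₂ ζ ξ = Σ (u x) ⊗ (y v)` for `ζ = Σ u ⊗ v`, `ξ = Σ x ⊗ y`: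
the product `ξ ·_T ζ` of two elements of `T = (A ⊗_B A)^B` on representatives. -/
def mul₂ : (A ⊗[ℤ] A) →ₗ[ℤ] (A ⊗[ℤ] A) →ₗ[ℤ] (A ⊗[ℤ] A) :=
  TensorProduct.lift <| LinearMap.mk₂ ℤ
    (fun u v => TensorProduct.map (LinearMap.mulLeft ℤ u) (LinearMap.mulRight ℤ v))
    (fun u u' v => by
      apply TensorProduct.ext'
      intro x y
      erw [LinearMap.add_apply, TensorProduct.map_tmul, TensorProduct.map_tmul,
        TensorProduct.map_tmul]
      simp [add_mul, TensorProduct.add_tmul])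
    (fun z u v => by
      apply TensorProduct.ext'
      intro x y
      simp only [TensorProduct.map_tmul, LinearMap.mulLeft_apply, LinearMap.mulRight_apply,
        LinearMap.smul_apply, smul_mul_assoc, TensorProduct.smul_tmul']
      erw [LinearMap.smul_apply, TensorProduct.map_tmul]
      rfl)
    (fun u v v' => by
      apply TensorProduct.ext'
      intro x y
      erw [LinearMap.add_apply, TensorProduct.map_tmul, TensorProduct.map_tmul,
        TensorProduct.map_tmul]
      simp [mul_add, TensorProduct.tmul_add])
    (fun z u v => by
      apply TensorProduct.ext'
      intro x y
      simp only [TensorProduct.map_tmul, LinearMap.mulLeft_apply, LinearMap.mulRight_apply,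
        LinearMap.smul_apply, mul_smul_comm, TensorProduct.tmul_smul]
      erw [LinearMap.smul_apply, TensorProduct.map_tmul]
      simp only [LinearMap.mulLeft_apply, LinearMap.mulRight_apply, mul_smul_comm,
        TensorProduct.tmul_smul])

/-- `A` is balanced as a right `B`-module. -/
def RightBalanced : Prop :=
  ∀ φ : A →+ A,
    (∀ f : A →+ A, (∀ a : A, ∀ b ∈ B, f (a * b) = f a * b) → ∀ a, φ (f a) = f (φ a)) →
    ∃ b ∈ B, ∀ a, φ a = a * b

end D2

end



section Aux

open TensorProduct

variable {A : Type*} [Ring A] (B : Subring A)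

lemma lmul_mk' (a x y : A) :
    D2.lmul A B a (Submodule.Quotient.mk (x ⊗ₜ[ℤ] y)) =
      Submodule.Quotient.mk ((a * x) ⊗ₜ[ℤ] y) := by
  rw [D2.lmul]
  erw [Submodule.mapQ_apply, TensorProduct.map_tmul]
  rfl

lemma rmul_mk' (a x y : A) :
    D2.rmul A B a (Submodule.Quotient.mk (x ⊗ₜ[ℤ] y)) =
      Submodule.Quotient.mk (x ⊗ₜ[ℤ] (y * a)) := by
  rw [D2.rmul]
  erw [Submodule.mapQ_apply, TensorProduct.map_tmul]
  rfl

lemma central_rel' (a c : A) (b : B) :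
    (Submodule.Quotient.mk ((a * (b : A)) ⊗ₜ[ℤ] c) : D2.TensorSq A B) =
      Submodule.Quotient.mk (a ⊗ₜ[ℤ] ((b : A) * c)) := by
  rw [Submodule.Quotient.eq]
  exact Submodule.subset_span ⟨a, c, b, rfl⟩

lemma lmul_lmul' (a a' : A) (t : D2.TensorSq A B) :
    D2.lmul A B a (D2.lmul A B a' t) = D2.lmul A B (a * a') t := by
  obtain ⟨ζ, rfl⟩ := Submodule.Quotient.mk_surjective _ t
  induction ζ using TensorProduct.induction_on with
  | zero => simp
  | tmul x y => simp [lmul_mk', mul_assoc]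
  | add p q hp hq =>
      simp only [Submodule.Quotient.mk_add, map_add, hp, hq]

lemma rmul_rmul' (a a' : A) (t : D2.TensorSq A B) :
    D2.rmul A B a (D2.rmul A B a' t) = D2.rmul A B (a' * a) t := by
  obtain ⟨ζ, rfl⟩ := Submodule.Quotient.mk_surjective _ t
  induction ζ using TensorProduct.induction_on with
  | zero => simp
  | tmul x y => simp [rmul_mk', mul_assoc]
  | add p q hp hq =>
      simp only [Submodule.Quotient.mk_add, map_add, hp, hq]

lemma lmul_rmul' (a c : A) (t : D2.TensorSq A B) :
    D2.lmul A B a (D2.rmul A B c t) = D2.rmul A B c (D2.lmul A B a t) := by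
  obtain ⟨ζ, rfl⟩ := Submodule.Quotient.mk_surjective _ t
  induction ζ using TensorProduct.induction_on with
  | zero => simp
  | tmul x y => simp [lmul_mk', rmul_mk']
  | add p q hp hq =>
      simp only [Submodule.Quotient.mk_add, map_add, hp, hq]

lemma lmul_add'' (a a' : A) (t : D2.TensorSq A B) :
    D2.lmul A B (a + a') t = D2.lmul A B a t + D2.lmul A B a' t := by
  obtain ⟨ζ, rfl⟩ := Submodule.Quotient.mk_surjective _ t
  induction ζ using TensorProduct.induction_on with
  | zero => simp
  | tmul x y => simp [lmul_mk', add_mul, TensorProduct.add_tmul]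
  | add p q hp hq =>
      simp only [Submodule.Quotient.mk_add, map_add, hp, hq]
      abel

lemma rmul_add'' (a a' : A) (t : D2.TensorSq A B) :
    D2.rmul A B (a + a') t = D2.rmul A B a t + D2.rmul A B a' t := by
  obtain ⟨ζ, rfl⟩ := Submodule.Quotient.mk_surjective _ t
  induction ζ using TensorProduct.induction_on with
  | zero => simp
  | tmul x y => simp [rmul_mk', mul_add, TensorProduct.tmul_add]
  | add p q hp hq =>
      simp only [Submodule.Quotient.mk_add, map_add, hp, hq]
      abel

lemma lmul_zsmul'' (z : ℤ) (a : A) (t : D2.TensorSq A B) :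
    D2.lmul A B (z • a) t = z • D2.lmul A B a t := by
  obtain ⟨ζ, rfl⟩ := Submodule.Quotient.mk_surjective _ t
  induction ζ using TensorProduct.induction_on with
  | zero => simp
  | tmul x y =>
      rw [lmul_mk', lmul_mk', smul_mul_assoc, ← TensorProduct.smul_tmul']
      exact (Submodule.mkQ (D2.relSub A B)).map_smul z _
  | add p q hp hq =>
      simp only [Submodule.Quotient.mk_add, map_add, hp, hq, smul_add]

lemma rmul_zsmul'' (z : ℤ) (a : A) (t : D2.TensorSq A B) :
    D2.rmul A B (z • a) t = z • D2.rmul A B a t := by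
  obtain ⟨ζ, rfl⟩ := Submodule.Quotient.mk_surjective _ t
  induction ζ using TensorProduct.induction_on with
  | zero => simp
  | tmul x y =>
      rw [rmul_mk', rmul_mk', mul_smul_comm, TensorProduct.tmul_smul]
      exact (Submodule.mkQ (D2.relSub A B)).map_smul z _
  | add p q hp hq =>
      simp only [Submodule.Quotient.mk_add, map_add, hp, hq, smul_add]

lemma mk_eq_lr (a c : A) :
    (Submodule.Quotient.mk (a ⊗ₜ[ℤ] c) : D2.TensorSq A B) =
      D2.lmul A B a (D2.rmul A B c (D2.tmulB A B 1 1)) := by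
  rw [D2.tmulB, rmul_mk', lmul_mk', one_mul, mul_one]

/-- The bilinear action `(a, c) ↦ lmul a (rmul c u)` on `A ⊗ℤ A`. -/
noncomputable def actB (u : D2.TensorSq A B) : (A ⊗[ℤ] A) →ₗ[ℤ] D2.TensorSq A B :=
  TensorProduct.lift <| LinearMap.mk₂ ℤ
    (fun a c => D2.lmul A B a (D2.rmul A B c u))
    (fun a a' c => lmul_add'' B a a' _)
    (fun z a c => lmul_zsmul'' B z a _)
    (fun a c c' => by
      show D2.lmul A B a (D2.rmul A B (c + c') u) = _
      rw [rmul_add'', map_add])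
    (fun z a c => by
      show D2.lmul A B a (D2.rmul A B (z • c) u) = _
      rw [rmul_zsmul'', map_smul])

@[simp] lemma actB_tmul (u : D2.TensorSq A B) (a c : A) :
    actB B u (a ⊗ₜ[ℤ] c) = D2.lmul A B a (D2.rmul A B c u) := rfl

lemma actB_rel (u : D2.TensorSq A B) (hu : D2.IsBCentral A B u) :
    D2.relSub A B ≤ LinearMap.ker (actB B u) := by
  refine Submodule.span_le.2 ?_
  rintro x ⟨a, c, b, rfl⟩
  simp only [SetLike.mem_coe, LinearMap.mem_ker, map_sub, actB_tmul]
  rw [← lmul_lmul', lmul_rmul', hu b b.2, rmul_rmul', sub_eq_zero]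

lemma mk_map_lr (u v : A) (ξ : A ⊗[ℤ] A) :
    (Submodule.Quotient.mk
        (TensorProduct.map (LinearMap.mulLeft ℤ u) (LinearMap.mulRight ℤ v) ξ) :
      D2.TensorSq A B) = D2.lmul A B u (D2.rmul A B v (Submodule.Quotient.mk ξ)) := by
  induction ξ using TensorProduct.induction_on with
  | zero => simp
  | tmul x y => simp [lmul_mk', rmul_mk', TensorProduct.map_tmul]
  | add p q hp hq =>
      simp only [Submodule.Quotient.mk_add, map_add, hp, hq]

/-- For any bimodule endomorphism `F` with `F(1⊗1) = mk ξ`,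
`F (mk ζ) = mk (mul₂ ζ ξ)`. -/
lemma F_mk (F : D2.TensorSq A B →ₗ[ℤ] D2.TensorSq A B)
    (hF : ∀ (a : A) (x), F (D2.lmul A B a x) = D2.lmul A B a (F x) ∧
      F (D2.rmul A B a x) = D2.rmul A B a (F x))
    (ξ : A ⊗[ℤ] A) (hξ : Submodule.Quotient.mk ξ = F (D2.tmulB A B 1 1))
    (ζ : A ⊗[ℤ] A) :
    F (Submodule.Quotient.mk ζ) = Submodule.Quotient.mk (D2.mul₂ A ζ ξ) := by
  induction ζ using TensorProduct.induction_on with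
  | zero =>
      rw [Submodule.Quotient.mk_zero, map_zero, map_zero, LinearMap.zero_apply,
        Submodule.Quotient.mk_zero]
  | tmul u v =>
      have htm : D2.mul₂ A (u ⊗ₜ[ℤ] v) ξ =
          TensorProduct.map (LinearMap.mulLeft ℤ u) (LinearMap.mulRight ℤ v) ξ := by
        rw [D2.mul₂]
        erw [TensorProduct.lift.tmul]
        rfl
      rw [mk_eq_lr, (hF u _).1, (hF v _).2, ← hξ, htm, mk_map_lr]
  | add p q hp hq =>
      simp only [Submodule.Quotient.mk_add, map_add, hp, hq, LinearMap.add_apply]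

end Aux

open TensorProduct in
/-- `T = (A ⊗_B A)^B` with product `t t' = t'¹ t¹ ⊗ t² t'²` and unit `1 ⊗ 1`
is a ring isomorphic to `End_{A-A}(A ⊗_B A)` via `F ↦ F(1 ⊗ 1)`: this evaluation map is
injective, has image exactly the `B`-central elements, and carries composition to the
stated product. -/
theorem stmt3 {A : Type*} [Ring A] (B : Subring A) :
    (∀ F : D2.TensorSq A B →ₗ[ℤ] D2.TensorSq A B,
      (∀ (a : A) (x), F (D2.lmul A B a x) = D2.lmul A B a (F x) ∧
        F (D2.rmul A B a x) = D2.rmul A B a (F x)) →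
      D2.IsBCentral A B (F (D2.tmulB A B 1 1)))
    ∧ (∀ F G : D2.TensorSq A B →ₗ[ℤ] D2.TensorSq A B,
      (∀ (a : A) (x), F (D2.lmul A B a x) = D2.lmul A B a (F x) ∧
        F (D2.rmul A B a x) = D2.rmul A B a (F x)) →
      (∀ (a : A) (x), G (D2.lmul A B a x) = D2.lmul A B a (G x) ∧
        G (D2.rmul A B a x) = D2.rmul A B a (G x)) →
      F (D2.tmulB A B 1 1) = G (D2.tmulB A B 1 1) → F = G)
    ∧ (∀ u : D2.TensorSq A B, D2.IsBCentral A B u →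
      ∃ F : D2.TensorSq A B →ₗ[ℤ] D2.TensorSq A B,
        (∀ (a : A) (x), F (D2.lmul A B a x) = D2.lmul A B a (F x) ∧
          F (D2.rmul A B a x) = D2.rmul A B a (F x)) ∧ F (D2.tmulB A B 1 1) = u)
    ∧ (∀ F G : D2.TensorSq A B →ₗ[ℤ] D2.TensorSq A B,
      (∀ (a : A) (x), F (D2.lmul A B a x) = D2.lmul A B a (F x) ∧
        F (D2.rmul A B a x) = D2.rmul A B a (F x)) →
      (∀ (a : A) (x), G (D2.lmul A B a x) = D2.lmul A B a (G x) ∧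
        G (D2.rmul A B a x) = D2.rmul A B a (G x)) →
      ∀ ζ ξ : A ⊗[ℤ] A,
        Submodule.Quotient.mk ζ = G (D2.tmulB A B 1 1) →
        Submodule.Quotient.mk ξ = F (D2.tmulB A B 1 1) →
        (F.comp G) (D2.tmulB A B 1 1) = Submodule.Quotient.mk (D2.mul₂ A ζ ξ)) := by
  refine ⟨?_, ?_, ?_, ?_⟩
  · -- B-centrality of F(1⊗1)
    intro F hF b hb
    have h1 : D2.lmul A B b (D2.tmulB A B 1 1) = D2.rmul A B b (D2.tmulB A B 1 1) := by
      have h2 := central_rel' B 1 1 ⟨b, hb⟩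
      rw [one_mul, mul_one] at h2
      rw [D2.tmulB, lmul_mk', rmul_mk', mul_one, one_mul]
      exact h2
    rw [← (hF b _).1, ← (hF b _).2, h1]
  · -- injectivity
    intro F G hF hG h
    apply LinearMap.ext
    intro x
    obtain ⟨ζ, rfl⟩ := Submodule.Quotient.mk_surjective _ x
    induction ζ using TensorProduct.induction_on with
    | zero => simp
    | tmul a c =>
        rw [mk_eq_lr, (hF a _).1, (hF c _).2, (hG a _).1, (hG c _).2, h]
    | add p q hp hq =>
        simp only [Submodule.Quotient.mk_add, map_add, hp, hq]
  · -- surjectivity onto B-central elements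
    intro u hu
    refine ⟨Submodule.liftQ _ (actB B u) (actB_rel B u hu), ?_, ?_⟩
    · intro a x
      obtain ⟨ζ, rfl⟩ := Submodule.Quotient.mk_surjective _ x
      constructor
      · induction ζ using TensorProduct.induction_on with
        | zero => simp
        | tmul x y =>
            rw [lmul_mk', Submodule.liftQ_apply, Submodule.liftQ_apply, actB_tmul,
              actB_tmul, ← lmul_lmul']
        | add p q hp hq =>
            simp only [Submodule.Quotient.mk_add, map_add, hp, hq]
      · induction ζ using TensorProduct.induction_on with
        | zero => simp
        | tmul x y =>
            rw [rmul_mk', Submodule.liftQ_apply, Submodule.liftQ_apply, actB_tmul,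
              actB_tmul, ← rmul_rmul', lmul_rmul']
        | add p q hp hq =>
            simp only [Submodule.Quotient.mk_add, map_add, hp, hq]
    · rw [D2.tmulB, Submodule.liftQ_apply, actB_tmul]
      clear hu
      obtain ⟨ζ, rfl⟩ := Submodule.Quotient.mk_surjective _ u
      induction ζ using TensorProduct.induction_on with
      | zero => simp
      | tmul x y => rw [rmul_mk', lmul_mk', one_mul, mul_one]
      | add p q hp hq =>
          simp only [Submodule.Quotient.mk_add, map_add, hp, hq]
  · -- composition
    intro F G hF hG ζ ξ hζ hξ
    rw [LinearMap.comp_apply, ← hζ, F_mk B F hF ξ hξ ζ]
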